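/- Every connected Tait-colored cubic graph can be reduced to a 1-patch graph (one whose three patch numbers are all 1, i.e., each pair of colors forms a single cycle) by a finite sequence of p-compressions (compressions along connecting edges). -/

import Mathlib

/-- A Tait-colored cubic graph (multigraphs allowed), encoded by three
fixed-point-free involutions on the vertex set, one for each color `c : Fin 3`:
`mat c` matches every vertex to the other endpoint of its unique edge of color `c`. -/
structure TaitGraph (V : Type) where
  mat : Fin 3 → V → V
  invol : ∀ c v, mat c (mat c v) = v
  nofix : ∀ c v, mat c v ≠ v

namespace TaitGraph

variable {V V' : Type}

/-- Two vertices lie on the same bi-colored cycle of the two colors other than `c`. -/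
def Conn (Γ : TaitGraph V) (c : Fin 3) : V → V → Prop :=
  Relation.ReflTransGen (fun x y => ∃ c', c' ≠ c ∧ Γ.mat c' x = y)

/-- The patch number for the pair of colors other than `c`: the number of
bi-colored cycles of those two colors. -/
noncomputable def patches (Γ : TaitGraph V) (c : Fin 3) : ℕ :=
  Nat.card (Quot (Γ.Conn c))

def OnePatch (Γ : TaitGraph V) : Prop := ∀ c, Γ.patches c = 1

def Bipartite (Γ : TaitGraph V) : Prop :=
  ∃ s : V → Bool, ∀ c v, s (Γ.mat c v) = !s v

def Connected (Γ : TaitGraph V) : Prop :=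
  Nonempty V ∧ ∀ x y : V, Relation.ReflTransGen (fun a b => ∃ c, Γ.mat c a = b) x y

/-- The number of edges: for each color, the edges of that color are the orbits
of the corresponding involution. -/
noncomputable def edgeCount (Γ : TaitGraph V) : ℕ :=
  ∑ c : Fin 3, Nat.card (Quot (fun x y : V => Γ.mat c x = y))

/-- Euler characteristic of the induced surface, computed from its CW structure:
vertices minus edges plus 2-cells (one 2-cell per bi-colored cycle). -/
noncomputable def chiS (Γ : TaitGraph V) : ℤ :=
  (Nat.card V : ℤ) - (Γ.edgeCount : ℤ) + (∑ c : Fin 3, (Γ.patches c : ℤ))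

/-- The edge of color `c` at `v` is orientation-reversing: its endpoints lie on the same
bi-colored cycle of the other two colors and receive the same sign in any alternating
`±`-labeling of the bi-colored cycles. -/
def OrientationReversing (Γ : TaitGraph V) (c : Fin 3) (v : V) : Prop :=
  Γ.Conn c v (Γ.mat c v) ∧
    ∀ s : V → Bool, (∀ c' v', c' ≠ c → s (Γ.mat c' v') = !s v') → s (Γ.mat c v) = s v

/-- The edge of color `c` at `v` is orientation-preserving: its endpoints lie on the same
bi-colored cycle of the other two colors and receive opposite signs in any alternating
`±`-labeling of the bi-colored cycles. -/
def OrientationPreserving (Γ : TaitGraph V) (c : Fin 3) (v : V) : Prop :=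
  Γ.Conn c v (Γ.mat c v) ∧
    ∀ s : V → Bool, (∀ c' v', c' ≠ c → s (Γ.mat c' v') = !s v') → s (Γ.mat c v) = !s v

/-- `Γ'` is the compression of `Γ` along the (non-parallel) edge of color `c` with
endpoints `v` and `Γ.mat c v`: delete the edge and its endpoints, and for each of the
other two colors merge the two deleted-vertex edges into a single edge. -/
def IsCompression (Γ : TaitGraph V) (c : Fin 3) (v : V) (Γ' : TaitGraph V') : Prop :=
  ∃ φ : V' ≃ {w : V // w ≠ v ∧ w ≠ Γ.mat c v},
    (∀ w : V', ((φ (Γ'.mat c w) : V)) = Γ.mat c ((φ w : V))) ∧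
    ∀ c' : Fin 3, c' ≠ c → ∀ w : V',
      (Γ.mat c' ((φ w : V)) = v ∧ ((φ (Γ'.mat c' w) : V)) = Γ.mat c' (Γ.mat c v)) ∨
      (Γ.mat c' ((φ w : V)) = Γ.mat c v ∧ ((φ (Γ'.mat c' w) : V)) = Γ.mat c' v) ∨
      (Γ.mat c' ((φ w : V)) ≠ v ∧ Γ.mat c' ((φ w : V)) ≠ Γ.mat c v ∧
        ((φ (Γ'.mat c' w) : V)) = Γ.mat c' ((φ w : V)))

end TaitGraph

/-- Bundled finite Tait-colored cubic graphs. -/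
def TG : Type := Σ n : ℕ, TaitGraph (Fin n)

/-- `Y` is obtained from `X` by a p-compression: compression along a connecting edge
(one whose endpoints lie on distinct bi-colored cycles of the opposite two colors). -/
def PComp (X Y : TG) : Prop :=
  ∃ (c : Fin 3) (v : Fin X.1),
    ¬ X.2.Conn c v (X.2.mat c v) ∧ X.2.IsCompression c v Y.2

/-- `Y` is obtained from `X` by a t-compression: compression along a non-parallel
orientation-preserving edge. -/
def TComp (X Y : TG) : Prop :=
  ∃ (c : Fin 3) (v : Fin X.1),
    X.2.OrientationPreserving c v ∧
    (∀ c' : Fin 3, c' ≠ c → X.2.mat c' v ≠ X.2.mat c v) ∧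
    X.2.IsCompression c v Y.2

/-- `Y` is obtained from `X` by a c-compression: compression along an
orientation-reversing edge. -/
def CComp (X Y : TG) : Prop :=
  ∃ (c : Fin 3) (v : Fin X.1),
    X.2.OrientationReversing c v ∧ X.2.IsCompression c v Y.2

/-- The theta graph: two vertices joined by three edges, one of each color.  (Any
Tait-colored cubic graph on two vertices is the theta graph.) -/
def IsTheta (X : TG) : Prop := X.1 = 2

/-! If some edge is connecting, compress along it: the result is again connected and has two
fewer vertices, so by induction it reduces to a 1-patch graph. If no edge is connecting, then
every edge of color `c` joins two vertices of the same bi-colored cycle avoiding `c`, so in a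
connected graph each of the three bi-colored 2-factors is a single cycle.

The substance is that compression preserves connectivity. The only edges lost are those at the
two endpoints `v`, `u` of the compressed edge `e`; an edge from `v` is replaced by going around
the bi-colored cycle through `v`, which does not contain `u` because `e` is connecting. -/

open Function Relation

lemma even_card_of_involutive {α : Type*} {f : α → α} (hf : Involutive f) (hfix : ∀ x, f x ≠ x)
    {s : Finset α} (hs : ∀ x ∈ s, f x ∈ s) : Even s.card := by
  have hsum : ∑ _x ∈ s, (1 : ZMod 2) = 0 :=
    Finset.sum_involution (fun x _ => f x) (fun _ _ => by decide) (fun x _ _ => hfix x) hs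
      (fun x _ => hf x)
  simpa [← ZMod.natCast_eq_zero_iff_even] using hsum

lemma Function.Involutive.reflTransGen_avoiding {α : Type*} [Finite α] {f g : α → α}
    (hf : Involutive f) (hg : Involutive g) (hf' : ∀ x, f x ≠ x) (hg' : ∀ x, g x ≠ x) (p : α) :
    ReflTransGen (fun x y => (f x = y ∨ g x = y) ∧ x ≠ p ∧ y ≠ p) (f p) (g p) := by
  classical
  have := Fintype.ofFinite α
  by_contra hgp
  set R : α → α → Prop := fun x y => (f x = y ∨ g x = y) ∧ x ≠ p ∧ y ≠ p
  set A := Finset.univ.filter (ReflTransGen R (f p))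
  have hmem : ∀ x, x ∈ A ↔ ReflTransGen R (f p) x := by simp [A]
  have hpA : p ∉ A := by
    rw [hmem]
    intro hr
    rcases hr.cases_tail with h | ⟨_, _, hstep⟩
    exacts [hf' p h.symm, hstep.2.2 rfl]
  -- `A` is closed under `g` and `insert p A` under `f`; their cardinalities differ by one.
  have hgA : Even A.card := by
    refine even_card_of_involutive hg hg' fun x hx => (hmem _).2 ?_
    have hxp : x ≠ p := fun h => hpA (h ▸ hx)
    have hgxp : g x ≠ p := fun h => hgp ((show x = g p by rw [← h, hg x]) ▸ (hmem x).1 hx)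
    exact ((hmem x).1 hx).tail ⟨.inr rfl, hxp, hgxp⟩
  have hfA : Even (insert p A).card := by
    refine even_card_of_involutive hf hf' fun x hx => ?_
    rcases Finset.mem_insert.1 hx with rfl | hx
    · exact Finset.mem_insert_of_mem ((hmem _).2 .refl)
    by_cases hfxp : f x = p
    · exact hfxp ▸ Finset.mem_insert_self _ _
    have hxp : x ≠ p := fun h => hpA (h ▸ hx)
    exact Finset.mem_insert_of_mem ((hmem _).2 (((hmem x).1 hx).tail ⟨.inl rfl, hxp, hfxp⟩))
  rw [Finset.card_insert_of_notMem hpA] at hfA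
  exact Nat.not_even_iff_odd.2 hgA.add_one hfA

namespace TaitGraph

variable {V W : Type}

lemma mat_involutive (Γ : TaitGraph V) (c : Fin 3) : Involutive (Γ.mat c) := Γ.invol c

def Reach (Γ : TaitGraph V) : V → V → Prop := ReflTransGen fun a b => ∃ c, Γ.mat c a = b

def IsConnecting (Γ : TaitGraph V) (c : Fin 3) (v : V) : Prop := ¬ Γ.Conn c v (Γ.mat c v)

section Basic

variable {Γ : TaitGraph V} {c c' : Fin 3} {v x y : V}

lemma Conn.symm (h : Γ.Conn c x y) : Γ.Conn c y x := by
  induction h with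
  | refl => exact .refl
  | tail _ hstep ih =>
    obtain ⟨c', hc', rfl⟩ := hstep
    exact ih.head ⟨c', hc', Γ.invol c' _⟩

lemma Reach.symm (h : Γ.Reach x y) : Γ.Reach y x := by
  induction h with
  | refl => exact .refl
  | tail _ hstep ih =>
    obtain ⟨c', rfl⟩ := hstep
    exact ih.head ⟨c', Γ.invol c' _⟩

lemma conn_mat (hc : c' ≠ c) (x : V) : Γ.Conn c x (Γ.mat c' x) := .single ⟨c', hc, rfl⟩

lemma IsConnecting.mat_ne (hv : Γ.IsConnecting c v) (hc : c' ≠ c) : Γ.mat c' v ≠ Γ.mat c v :=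
  fun h => hv (h ▸ conn_mat hc v)

lemma IsConnecting.mat_mat_ne (hv : Γ.IsConnecting c v) (hc : c' ≠ c) :
    Γ.mat c' (Γ.mat c v) ≠ v := by
  intro h
  exact hv.mat_ne hc (by rw [← Γ.invol c' (Γ.mat c v), h])

lemma IsConnecting.ne_of_conn (hv : Γ.IsConnecting c v) {p z : V} (hp : p = v ∨ p = Γ.mat c v)
    (hpz : Γ.Conn c p z) (hz : z ≠ p) : z ≠ v ∧ z ≠ Γ.mat c v := by
  rcases hp with rfl | rfl
  · exact ⟨hz, fun h => hv (h ▸ hpz)⟩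
  · exact ⟨fun h => hv (h ▸ hpz).symm, hz⟩

lemma IsConnecting.mat_ne_and_ne (hv : Γ.IsConnecting c v) {p : V} (hp : p = v ∨ p = Γ.mat c v)
    (hc : c' ≠ c) : Γ.mat c' p ≠ v ∧ Γ.mat c' p ≠ Γ.mat c v :=
  hv.ne_of_conn hp (conn_mat hc p) (Γ.nofix c' p)

end Basic

section Compress

variable [DecidableEq V]

variable (Γ : TaitGraph V) (c : Fin 3) (v : V) in
def compressMat (c' : Fin 3) (w : V) : V :=
  if c' = c then Γ.mat c w
  else if Γ.mat c' w = v then Γ.mat c' (Γ.mat c v)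
  else if Γ.mat c' w = Γ.mat c v then Γ.mat c' v
  else Γ.mat c' w

variable {Γ : TaitGraph V} {c : Fin 3} {v : V}

lemma compressMat_ne (hv : Γ.IsConnecting c v) (c' : Fin 3) {w : V} (hw : w ≠ v ∧ w ≠ Γ.mat c v) :
    compressMat Γ c v c' w ≠ v ∧ compressMat Γ c v c' w ≠ Γ.mat c v := by
  have := hv.mat_ne (c' := c')
  have := hv.mat_mat_ne (c' := c')
  unfold compressMat
  grind [TaitGraph.invol, TaitGraph.nofix]

lemma compressMat_compressMat (c' : Fin 3) {w : V} (hw : w ≠ v ∧ w ≠ Γ.mat c v) :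
    compressMat Γ c v c' (compressMat Γ c v c' w) = w := by
  unfold compressMat
  grind [TaitGraph.invol, TaitGraph.nofix]

lemma compressMat_ne_self (c' : Fin 3) (w : V) : compressMat Γ c v c' w ≠ w := by
  unfold compressMat
  grind [TaitGraph.invol, TaitGraph.nofix]

def compress (hv : Γ.IsConnecting c v) : TaitGraph {w : V // w ≠ v ∧ w ≠ Γ.mat c v} where
  mat c' w := ⟨compressMat Γ c v c' w, compressMat_ne hv c' w.2⟩
  invol c' w := Subtype.ext (compressMat_compressMat c' w.2)
  nofix c' w h := compressMat_ne_self c' w.1 (congrArg Subtype.val h)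

lemma isCompression_compress (hv : Γ.IsConnecting c v) : Γ.IsCompression c v (compress hv) := by
  refine ⟨Equiv.refl _, fun w => if_pos rfl, fun c' hc' w => ?_⟩
  simp only [Equiv.refl_apply, compress, compressMat, if_neg hc']
  grind

end Compress

lemma add_one_ne_self (c : Fin 3) : c + 1 ≠ c := by
  revert c
  decide

section Connected

variable [DecidableEq V] {Γ : TaitGraph V} {c c' : Fin 3} {v x : V}

/-- `c + 1` stands for any color other than `c`. -/
def retract (hv : Γ.IsConnecting c v) (x : V) : {w : V // w ≠ v ∧ w ≠ Γ.mat c v} :=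
  if h : x ≠ v ∧ x ≠ Γ.mat c v then ⟨x, h⟩
  else ⟨Γ.mat (c + 1) x, hv.mat_ne_and_ne (by tauto) (add_one_ne_self c)⟩

lemma retract_of_ne (hv : Γ.IsConnecting c v) (hx : x ≠ v ∧ x ≠ Γ.mat c v) :
    retract hv x = ⟨x, hx⟩ :=
  dif_pos hx

lemma retract_of_eq (hv : Γ.IsConnecting c v) (hx : x = v ∨ x = Γ.mat c v) :
    retract hv x = retract hv (Γ.mat (c + 1) x) := by
  rw [retract, dif_neg (by tauto), retract_of_ne hv (hv.mat_ne_and_ne hx (add_one_ne_self c))]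

lemma compress_mat_retract (hv : Γ.IsConnecting c v) (hx : x ≠ v ∧ x ≠ Γ.mat c v)
    (hy : Γ.mat c' x ≠ v ∧ Γ.mat c' x ≠ Γ.mat c v) :
    (compress hv).mat c' (retract hv x) = retract hv (Γ.mat c' x) := by
  rw [retract_of_ne hv hx, retract_of_ne hv hy]
  ext
  change compressMat Γ c v c' x = _
  unfold compressMat
  grind

lemma compress_mat_add_one_retract (hv : Γ.IsConnecting c v) (hx : x = v ∨ x = Γ.mat c v) :
    (compress hv).mat (c + 1) (retract hv x) = retract hv (Γ.mat c x) := by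
  have hy : Γ.mat c x = v ∨ Γ.mat c x = Γ.mat c v := by
    rcases hx with rfl | rfl
    exacts [.inr rfl, .inl (Γ.invol c v)]
  rw [retract_of_eq hv hx, retract_of_eq hv hy,
    retract_of_ne hv (hv.mat_ne_and_ne hx (add_one_ne_self c)),
    retract_of_ne hv (hv.mat_ne_and_ne hy (add_one_ne_self c))]
  ext
  change compressMat Γ c v (c + 1) _ = _
  unfold compressMat
  grind [TaitGraph.invol, add_one_ne_self]

lemma reach_compress_retract_mat_mat [Finite V] (hv : Γ.IsConnecting c v) {p : V}
    (hp : p = v ∨ p = Γ.mat c v) {c₁ c₂ : Fin 3} (h₁ : c₁ ≠ c) (h₂ : c₂ ≠ c) :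
    (compress hv).Reach (retract hv (Γ.mat c₁ p)) (retract hv (Γ.mat c₂ p)) := by
  have hpath := (Γ.mat_involutive c₁).reflTransGen_avoiding (Γ.mat_involutive c₂)
    (Γ.nofix c₁) (Γ.nofix c₂) p
  -- The path stays on the bi-colored cycle through `p`, hence among the surviving vertices.
  suffices ∀ z, ReflTransGen (fun x y => (Γ.mat c₁ x = y ∨ Γ.mat c₂ x = y) ∧ x ≠ p ∧ y ≠ p)
      (Γ.mat c₁ p) z → Γ.Conn c p z ∧ (compress hv).Reach (retract hv (Γ.mat c₁ p)) (retract hv z)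
    from (this _ hpath).2
  intro z hz
  induction hz with
  | refl => exact ⟨conn_mat h₁ p, .refl⟩
  | @tail x y _ hstep ih =>
    obtain ⟨hor, hxp, hyp⟩ := hstep
    obtain ⟨c', hc', hxy⟩ : ∃ c', c' ≠ c ∧ Γ.mat c' x = y :=
      hor.elim (⟨c₁, h₁, ·⟩) (⟨c₂, h₂, ·⟩)
    have hy : Γ.Conn c p y := ih.1.tail ⟨c', hc', hxy⟩
    refine ⟨hy, ih.2.tail ⟨c', ?_⟩⟩
    subst hxy
    exact compress_mat_retract hv (hv.ne_of_conn hp ih.1 hxp) (hv.ne_of_conn hp hy hyp)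

lemma reach_compress_retract_mat_of_eq [Finite V] (hv : Γ.IsConnecting c v)
    (hx : x = v ∨ x = Γ.mat c v) (c' : Fin 3) :
    (compress hv).Reach (retract hv x) (retract hv (Γ.mat c' x)) := by
  by_cases hc : c' = c
  · subst hc
    exact .single ⟨c' + 1, compress_mat_add_one_retract hv hx⟩
  · rw [retract_of_eq hv hx]
    exact reach_compress_retract_mat_mat hv hx (add_one_ne_self c) hc

lemma reach_compress_retract_mat [Finite V] (hv : Γ.IsConnecting c v) (x : V) (c' : Fin 3) :
    (compress hv).Reach (retract hv x) (retract hv (Γ.mat c' x)) := by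
  by_cases hx : x = v ∨ x = Γ.mat c v
  · exact reach_compress_retract_mat_of_eq hv hx c'
  by_cases hy : Γ.mat c' x = v ∨ Γ.mat c' x = Γ.mat c v
  · have h := reach_compress_retract_mat_of_eq hv hy c'
    rw [Γ.invol] at h
    exact h.symm
  push Not at hx hy
  exact .single ⟨c', compress_mat_retract hv hx hy⟩

lemma connected_compress [Finite V] (hΓ : Γ.Connected) (hv : Γ.IsConnecting c v) :
    (compress hv).Connected := by
  refine ⟨⟨retract hv hΓ.1.some⟩, fun a b => ?_⟩
  have h : (compress hv).Reach (retract hv a) (retract hv b) :=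
    (hΓ.2 a b).lift' (retract hv) fun x y ⟨c', hxy⟩ => hxy ▸ reach_compress_retract_mat hv x c'
  rwa [retract_of_ne hv a.2, retract_of_ne hv b.2] at h

end Connected

def map (e : V ≃ W) (Γ : TaitGraph V) : TaitGraph W where
  mat c w := e (Γ.mat c (e.symm w))
  invol c w := by simp [Γ.invol]
  nofix c w h := Γ.nofix c (e.symm w) (by simpa using congrArg e.symm h)

lemma Connected.map (e : V ≃ W) {Γ : TaitGraph V} (hΓ : Γ.Connected) : (Γ.map e).Connected := by
  refine ⟨⟨e hΓ.1.some⟩, fun x y => ?_⟩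
  have h : (Γ.map e).Reach (e (e.symm x)) (e (e.symm y)) :=
    (hΓ.2 _ _).lift e fun a b ⟨c, hab⟩ => ⟨c, by simp [TaitGraph.map, hab]⟩
  rwa [e.apply_symm_apply, e.apply_symm_apply] at h

lemma IsCompression.map {V' : Type} {Γ : TaitGraph V} {c : Fin 3} {v : V} {Γ' : TaitGraph V'}
    (h : Γ.IsCompression c v Γ') (e : V' ≃ W) : Γ.IsCompression c v (Γ'.map e) := by
  obtain ⟨φ, h₁, h₂⟩ := h
  refine ⟨e.symm.trans φ, fun w => ?_, fun c' hc' w => ?_⟩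
  · simpa [TaitGraph.map] using h₁ (e.symm w)
  · simpa [TaitGraph.map] using h₂ c' hc' (e.symm w)

lemma onePatch_of_forall_not_isConnecting {Γ : TaitGraph V} (hΓ : Γ.Connected)
    (h : ∀ c v, ¬ Γ.IsConnecting c v) : Γ.OnePatch := by
  intro c
  have hconn (x y : V) : Γ.Conn c x y := by
    refine reflTransGen_closed (fun a b ⟨c', hab⟩ => ?_) x y (hΓ.2 x y)
    subst hab
    by_cases hc : c' = c
    · subst hc
      exact not_not.1 (h c' a)
    · exact conn_mat hc a
  have : Subsingleton (Quot (Γ.Conn c)) := ⟨by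
    rintro ⟨x⟩ ⟨y⟩
    exact Quot.sound (hconn x y)⟩
  exact Nat.card_eq_one_iff_unique.2 ⟨this, hΓ.1.map (Quot.mk _)⟩

end TaitGraph

open TaitGraph

lemma exists_pComp_lt {X : TG} (hX : X.2.Connected) {c : Fin 3} {v : Fin X.1}
    (hv : X.2.IsConnecting c v) : ∃ Y, PComp X Y ∧ Y.1 < X.1 ∧ Y.2.Connected := by
  let e := Fintype.equivFin {w : Fin X.1 // w ≠ v ∧ w ≠ X.2.mat c v}
  refine ⟨⟨_, (compress hv).map e⟩, ⟨c, v, hv, (isCompression_compress hv).map e⟩, ?_,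
    (connected_compress hX hv).map e⟩
  simpa using Fintype.card_subtype_lt (p := fun w => w ≠ v ∧ w ≠ X.2.mat c v) (x := v) (by simp)

/-- Every connected Tait-colored cubic graph can be reduced to a
1-patch graph (each pair of colors forming a single bi-colored cycle) by a finite
sequence of p-compressions (compressions along connecting edges). -/
theorem reduce_to_one_patch_by_p_compressions
    (X : TG) (hconn : X.2.Connected) :
    ∃ Y : TG, Relation.ReflTransGen PComp X Y ∧ Y.2.OnePatch := by
  induction hn : X.1 using Nat.strong_induction_on generalizing X with
  | _ n ih =>
    by_cases h : ∃ c v, X.2.IsConnecting c v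
    · obtain ⟨c, v, hv⟩ := h
      obtain ⟨Y, hXY, hlt, hY⟩ := exists_pComp_lt hconn hv
      obtain ⟨Z, hYZ, hZ⟩ := ih Y.1 (hn ▸ hlt) Y hY rfl
      exact ⟨Z, hYZ.head hXY, hZ⟩
    · push Not at h
      exact ⟨X, .refl, onePatch_of_forall_not_isConnecting hconn h⟩
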